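/- Let $R_k = [0,2^{-k+1}]\times[0,2^{-j_k}]$ and $C_N \subset [0,1]$ as in the crystallization construction. Then for each $k \in \{1,\ldots,N\}$, $\frac{1}{m_2(R_k)} \int_{R_k} \chi_{E_N} = 2^{-N}$, where $E_N = [0,2^{-N+1}] \times C_N$. -/

import Mathlib

open MeasureTheory
open scoped ENNReal

/-- The Rademacher function `r₀ = χ_{[0,1/2]} - χ_{(1/2,1)}`, extended 1-periodically. -/
noncomputable def r0 (t : ℝ) : ℝ := if Int.fract t ≤ 1/2 then 1 else -1

/-!
Only the vertical factor needs work: `E_N ∩ R_k = [0, 2^{-N+1}] × (C_N ∩ [0, 2^{-j_k}])`.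
On `[0, 2^{-j_k}]` the conditions with `m > k` hold automatically, since there
`2^{j_m} t ≤ 1/2`. Let `G_l` be the set cut out by the first `l` conditions. It is
`2^{-j_l}`-periodic, and on `[0, 2^{-j_l})` the `l`-th condition just says `t ≤ 2^{-j_l-1}`.
Hence `|G_l ∩ [0, 2^{-c})| = 2^{j_l-c} |G_{l-1} ∩ [0, 2^{-j_l-1})|`, and by induction
`|G_l ∩ [0, 2^{-c})| = 2^{-c-l}` whenever `c ≤ j_m` for all `m ≤ l`. With `c = j_k`, `l = k`
the average is `2^{-N+1} 2^{-j_k-k} / (2^{-k+1} 2^{-j_k}) = 2^{-N}`.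
-/

open Set Function

lemma ENNReal.ofReal_zpow {x : ℝ} (hx : 0 < x) (n : ℤ) :
    ENNReal.ofReal (x ^ n) = ENNReal.ofReal x ^ n := by
  rw [ENNReal.ofReal, Real.toNNReal_zpow hx.le, ENNReal.coe_zpow (by simpa), ENNReal.ofReal]

lemma setLIntegral_indicator_one_prod {α β : Type*} [MeasurableSpace α] [MeasurableSpace β]
    (μ : Measure α) (ν : Measure β) [SFinite ν] {A I : Set α} {B J : Set β}
    (hA : MeasurableSet A) (hB : MeasurableSet B) :
    ∫⁻ p in I ×ˢ J, (A ×ˢ B).indicator 1 p ∂μ.prod ν = μ (A ∩ I) * ν (B ∩ J) := by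
  rw [lintegral_indicator_one (hA.prod hB), Measure.restrict_apply (hA.prod hB), prod_inter_prod,
    Measure.prod_prod]

lemma volume_inter_Ico_natCast_mul {S : Set ℝ} (hS : MeasurableSet S) {p : ℝ} (hp : 0 ≤ p)
    (hper : Periodic (· ∈ S) p) (n : ℕ) :
    volume (S ∩ Ico 0 (n * p)) = n * volume (S ∩ Ico 0 p) := by
  induction n with
  | zero => simp
  | succ n ih =>
    have hshift : S ∩ Ico (n * p) ((n + 1 : ℕ) * p) = (· + -(n * p)) ⁻¹' (S ∩ Ico 0 p) := by
      ext t
      simp only [mem_inter_iff, mem_preimage, mem_Ico, ← sub_eq_add_neg,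
        show (t - n * p ∈ S) = (t ∈ S) from (hper.nat_mul n).sub_eq t]
      push_cast
      constructor <;> rintro ⟨h, h1, h2⟩ <;> exact ⟨h, by linarith, by linarith⟩
    rw [← Ico_union_Ico_eq_Ico (b := n * p) (by positivity) (by gcongr; omega),
      inter_union_distrib_left, measure_union (Ico_disjoint_Ico_same.mono inter_subset_right inter_subset_right)
        (hS.inter measurableSet_Ico), ih, hshift, measure_preimage_add_right]
    push_cast; ring

lemma r0_eq_one_iff {x : ℝ} : r0 x = 1 ↔ Int.fract x ≤ 1 / 2 := by
  unfold r0; split_ifs with h <;> norm_num [h]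

lemma r0_add_natCast (x : ℝ) (n : ℕ) : r0 (x + n) = r0 x := by
  simp only [r0, Int.fract_add_natCast]

lemma setOf_r0_two_pow_mul_eq_one_inter_Ico (b : ℕ) :
    {t : ℝ | r0 (2 ^ b * t) = 1} ∩ Ico 0 ((2 : ℝ) ^ b)⁻¹ = Icc 0 ((2 : ℝ) ^ (b + 1))⁻¹ := by
  have h2b : (0 : ℝ) < 2 ^ b := by positivity
  have hfract {t : ℝ} (ht : t ∈ Ico 0 ((2 : ℝ) ^ b)⁻¹) : Int.fract (2 ^ b * t) = 2 ^ b * t := by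
    refine Int.fract_eq_self.2 ⟨by positivity [ht.1], ?_⟩
    calc 2 ^ b * t < 2 ^ b * (2 ^ b)⁻¹ := by gcongr; exact ht.2
      _ = 1 := mul_inv_cancel₀ h2b.ne'
  have hhalf {t : ℝ} : 2 ^ b * t ≤ 1 / 2 ↔ t ≤ ((2 : ℝ) ^ (b + 1))⁻¹ := by
    rw [show ((2 : ℝ) ^ (b + 1))⁻¹ = 1 / 2 / 2 ^ b by rw [pow_succ]; field_simp,
      le_div_iff₀ h2b, mul_comm]
  have hlt : ((2 : ℝ) ^ (b + 1))⁻¹ < (2 ^ b)⁻¹ := by gcongr <;> norm_num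
  ext t
  simp only [mem_inter_iff, mem_ofPred_eq, r0_eq_one_iff]
  constructor
  · rintro ⟨hfr, ht⟩
    exact ⟨ht.1, hhalf.1 (hfract ht ▸ hfr)⟩
  · intro ht
    have ht' : t ∈ Ico 0 ((2 : ℝ) ^ b)⁻¹ := ⟨ht.1, ht.2.trans_lt hlt⟩
    exact ⟨(hfract ht').symm ▸ hhalf.2 ht.2, ht'⟩

/-- The set `G_l`; thus `C_N = [0, 1] ∩ G_N`. -/
def rademacherSet (j : ℕ → ℕ) (l : ℕ) : Set ℝ :=
  {t | ∀ m, 1 ≤ m → m ≤ l → r0 (2 ^ j m * t) = 1}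

lemma measurableSet_rademacherSet (j : ℕ → ℕ) (l : ℕ) : MeasurableSet (rademacherSet j l) := by
  simp only [rademacherSet, r0_eq_one_iff, ofPred_forall]
  exact .iInter fun m => .iInter fun _ => .iInter fun _ =>
    measurableSet_le (by fun_prop) measurable_const

lemma rademacherSet_succ (j : ℕ → ℕ) (l : ℕ) :
    rademacherSet j (l + 1) = rademacherSet j l ∩ {t | r0 (2 ^ j (l + 1) * t) = 1} := by
  ext t
  simp only [rademacherSet, mem_inter_iff, mem_ofPred_eq]
  refine ⟨fun h => ⟨fun m h1 h2 => h m h1 (by omega), h _ (by omega) le_rfl⟩, ?_⟩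
  rintro ⟨h, hl⟩ m h1 h2
  rcases Nat.lt_or_eq_of_le h2 with h2 | rfl
  exacts [h m h1 (by omega), hl]

lemma periodic_mem_rademacherSet {j : ℕ → ℕ} {l b : ℕ} (hb : ∀ m, 1 ≤ m → m ≤ l → b ≤ j m) :
    Periodic (· ∈ rademacherSet j l) ((2 : ℝ) ^ b)⁻¹ := by
  intro t
  have hshift : ∀ m, 1 ≤ m → m ≤ l → r0 (2 ^ j m * (t + (2 ^ b)⁻¹)) = r0 (2 ^ j m * t) := by
    intro m h1 h2
    obtain ⟨d, hd⟩ := Nat.exists_eq_add_of_le (hb m h1 h2)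
    have hint : (2 : ℝ) ^ j m * (2 ^ b)⁻¹ = (2 ^ d : ℕ) := by
      rw [hd, pow_add]; field_simp; push_cast; ring
    rw [mul_add, hint, r0_add_natCast]
  simp +contextual only [rademacherSet, mem_ofPred_eq, hshift]

lemma volume_rademacherSet_inter_Ico {j : ℕ → ℕ} {l : ℕ} (hj : StrictAntiOn j (Icc 1 l)) {c : ℕ}
    (hc : ∀ m, 1 ≤ m → m ≤ l → c ≤ j m) :
    volume (rademacherSet j l ∩ Ico 0 ((2 : ℝ) ^ c)⁻¹) = ((2 : ℝ≥0∞) ^ (c + l))⁻¹ := by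
  induction l generalizing c with
  | zero =>
    have hempty : rademacherSet j 0 = univ := eq_univ_of_forall fun t m h1 h2 => by omega
    rw [hempty, univ_inter, Real.volume_Ico, sub_zero, ENNReal.ofReal_inv_of_pos (by positivity),
      ENNReal.ofReal_pow zero_le_two, ENNReal.ofReal_ofNat, add_zero]
  | succ l ih =>
    set b := j (l + 1)
    have hcb : c ≤ b := hc _ (by omega) le_rfl
    have hjb : ∀ m, 1 ≤ m → m ≤ l → b + 1 ≤ j m := fun m h1 h2 =>
      hj ⟨h1, by omega⟩ ⟨by omega, le_rfl⟩ (by omega)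
    have hscale : ((2 : ℝ) ^ c)⁻¹ = (2 ^ (b - c) : ℕ) * ((2 : ℝ) ^ b)⁻¹ := by
      field_simp
      rw [Nat.cast_pow, Nat.cast_ofNat, ← pow_add, Nat.add_sub_cancel' hcb]
    rw [hscale, volume_inter_Ico_natCast_mul (measurableSet_rademacherSet j _) (by positivity)
      (periodic_mem_rademacherSet fun m h1 h2 => ?_), rademacherSet_succ, inter_assoc,
      setOf_r0_two_pow_mul_eq_one_inter_Ico,
      measure_congr ((ae_eq_refl _).inter Ico_ae_eq_Icc).symm, ih (hj.mono (Icc_subset_Icc_right (by omega))) hjb]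
    · rw [Nat.cast_pow, Nat.cast_ofNat, show b + 1 + l = b - c + (c + (l + 1)) by omega, pow_add,
        ENNReal.mul_inv (by simp) (by simp), ← mul_assoc,
        ENNReal.mul_inv_cancel (by simp) (by simp), one_mul]
    · exact hj.antitoneOn ⟨h1, h2⟩ ⟨by omega, le_rfl⟩ h2

lemma rademacherSet_inter_Icc_eq {j : ℕ → ℕ} {k N : ℕ} (hj : StrictAntiOn j (Icc 1 N))
    (hk1 : 1 ≤ k) (hkN : k ≤ N) :
    rademacherSet j N ∩ Icc 0 ((2 : ℝ) ^ j k)⁻¹ = rademacherSet j k ∩ Icc 0 ((2 : ℝ) ^ j k)⁻¹ := by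
  ext t
  refine ⟨fun ⟨h, ht⟩ => ⟨fun m h1 h2 => h m h1 (h2.trans hkN), ht⟩, fun ⟨h, ht⟩ => ⟨?_, ht⟩⟩
  intro m h1 h2
  rcases le_or_gt m k with hmk | hkm
  · exact h m h1 hmk
  have hjm : j m + 1 ≤ j k := hj ⟨hk1, hkN⟩ ⟨h1, h2⟩ hkm
  have ht' : t ∈ Icc 0 ((2 : ℝ) ^ (j m + 1))⁻¹ :=
    ⟨ht.1, ht.2.trans (by gcongr; norm_num)⟩
  exact ((setOf_r0_two_pow_mul_eq_one_inter_Ico (j m)).ge ht').1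

lemma volume_Icc_inter_rademacherSet_inter_Icc {j : ℕ → ℕ} {k N : ℕ}
    (hj : StrictAntiOn j (Icc 1 N)) (hk1 : 1 ≤ k) (hkN : k ≤ N) :
    volume (Icc 0 1 ∩ rademacherSet j N ∩ Icc 0 ((2 : ℝ) ^ j k)⁻¹) =
      ((2 : ℝ≥0∞) ^ (j k + k))⁻¹ := by
  rw [inter_right_comm, inter_eq_right.2 (Icc_subset_Icc_right
      (inv_le_one_of_one_le₀ (one_le_pow₀ one_le_two))), inter_comm,
    rademacherSet_inter_Icc_eq hj hk1 hkN, ← measure_congr ((ae_eq_refl _).inter Ico_ae_eq_Icc)]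
  exact volume_rademacherSet_inter_Ico (hj.mono (Icc_subset_Icc_right hkN))
    fun m h1 h2 => hj.antitoneOn ⟨h1, h2.trans hkN⟩ ⟨hk1, hkN⟩ h2

theorem stmt13_general (N : ℕ) (j : ℕ → ℕ)
    (hsp : ∀ m, 2 ≤ m → m ≤ N → N + j m < j (m - 1))
    (k : ℕ) (hk1 : 1 ≤ k) (hkN : k ≤ N) :
    (∫⁻ p in Set.Icc (0:ℝ) ((2:ℝ) ^ (1 - (k:ℤ))) ×ˢ Set.Icc (0:ℝ) ((2:ℝ) ^ (-(j k:ℤ))),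
        Set.indicator
          (Set.Icc (0:ℝ) ((2:ℝ) ^ (1 - (N:ℤ))) ×ˢ
            {t ∈ Set.Icc (0:ℝ) 1 | ∀ m, 1 ≤ m → m ≤ N → r0 ((2:ℝ) ^ (j m) * t) = 1})
          (1 : (ℝ × ℝ) → ℝ≥0∞) p) /
      volume (Set.Icc (0:ℝ) ((2:ℝ) ^ (1 - (k:ℤ))) ×ˢ Set.Icc (0:ℝ) ((2:ℝ) ^ (-(j k:ℤ))))
      = (2:ℝ≥0∞) ^ (-(N:ℤ)) := by
  have hj : StrictAntiOn j (Icc 1 N) := strictAntiOn_of_add_one_lt ordConnected_Icc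
    fun m _ hm hm' => by
      have := hsp (m + 1) (Nat.succ_le_succ hm.1) hm'.2
      rw [Nat.add_sub_cancel] at this
      omega
  have hNk : Icc (0 : ℝ) (2 ^ (1 - (N : ℤ))) ∩ Icc 0 (2 ^ (1 - (k : ℤ))) =
      Icc 0 (2 ^ (1 - (N : ℤ))) :=
    inter_eq_left.2 (Icc_subset_Icc_right (zpow_le_zpow_right₀ one_le_two (by omega)))
  rw [Measure.volume_eq_prod, show {t ∈ Icc (0 : ℝ) 1 | ∀ m, 1 ≤ m → m ≤ N → r0 (2 ^ j m * t) = 1}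
      = Icc 0 1 ∩ rademacherSet j N from rfl,
    setLIntegral_indicator_one_prod _ _ measurableSet_Icc
      (measurableSet_Icc.inter (measurableSet_rademacherSet j N)),
    Measure.prod_prod, hNk, zpow_neg, zpow_natCast,
    volume_Icc_inter_rademacherSet_inter_Icc hj hk1 hkN]
  have h2 : (2 : ℝ≥0∞) ≠ 0 := two_ne_zero
  have h2' : (2 : ℝ≥0∞) ≠ ⊤ := ENNReal.ofNat_ne_top
  simp only [Real.volume_Icc, sub_zero, ENNReal.ofReal_zpow two_pos, ENNReal.ofReal_ofNat,
    ENNReal.ofReal_inv_of_pos (pow_pos two_pos _), ENNReal.ofReal_pow zero_le_two]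
  simp only [← zpow_natCast, ← ENNReal.zpow_neg, ← ENNReal.zpow_add h2 h2']
  rw [div_eq_mul_inv, ← ENNReal.zpow_sub h2 h2']
  congr 1
  push_cast
  ring

/-- With `C_N = {t ∈ [0,1] : r₀(2^{j_m} t) = 1, m = 1,…,N}`, `E_N = [0,2^{-N+1}] × C_N`,
and `R_k = [0,2^{-k+1}] × [0,2^{-j_k}]`, under the sparseness condition
`j_{k-1} > N + j_k`, the average of `χ_{E_N}` over `R_k` equals `2^{-N}` for each
`1 ≤ k ≤ N`. -/
theorem stmt13 (N : ℕ) (hN : 1 ≤ N) (j : ℕ → ℕ)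
    (hsp : ∀ m, 2 ≤ m → m ≤ N → N + j m < j (m - 1))
    (k : ℕ) (hk1 : 1 ≤ k) (hkN : k ≤ N) :
    (∫⁻ p in Set.Icc (0:ℝ) ((2:ℝ) ^ (1 - (k:ℤ))) ×ˢ Set.Icc (0:ℝ) ((2:ℝ) ^ (-(j k:ℤ))),
        Set.indicator
          (Set.Icc (0:ℝ) ((2:ℝ) ^ (1 - (N:ℤ))) ×ˢ
            {t ∈ Set.Icc (0:ℝ) 1 | ∀ m, 1 ≤ m → m ≤ N → r0 ((2:ℝ) ^ (j m) * t) = 1})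
          (1 : (ℝ × ℝ) → ℝ≥0∞) p) /
      volume (Set.Icc (0:ℝ) ((2:ℝ) ^ (1 - (k:ℤ))) ×ˢ Set.Icc (0:ℝ) ((2:ℝ) ^ (-(j k:ℤ))))
      = (2:ℝ≥0∞) ^ (-(N:ℤ)) :=
  stmt13_general N j hsp k hk1 hkN
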